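/- arXiv:2309.06790 — 5 statements merged into one kernel-verified Lean document; each statement's English description precedes it below -/
import Mathlib

section
/- Let φ : ℝ^m → ℝ^m be a C¹ map on Euclidean space with φ(0) = 0 and with injective derivative Dφ(0) at the origin. Then there exists ε > 0 such that for every unit vector z (‖z‖ = 1) and every t ∈ (0, ε), the inner product ⟨φ(t·z), Dφ(t·z)(z)⟩ is strictly positive. In particular each image ray t ↦ φ(t·z) crosses every sphere centered at the origin that it meets in this range transversely, so the image under φ of a radial cone is transverse to all sufficiently small spheres centered at the origin. -/
open scoped RealInnerProductSpace
open Set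

/-!
Write `A = Dφ(0)`; injectivity in finite dimension gives `‖A z‖ ≥ c > 0` on the unit sphere.
For small `t`, differentiability at `0` puts `t⁻¹ φ(tz)` and continuity of `Dφ` puts `Dφ(tz) z`
within `c / 3` of `A z`, uniformly in `z`. Two vectors that close to a vector of norm `≥ c`
have positive inner product (polarization: `‖u - v‖ < ‖u + v‖`), and scaling by `t > 0`
does not change the sign.
-/

theorem real_inner_pos_of_norm_sub_add_norm_sub_lt {F : Type*} [NormedAddCommGroup F]
    [InnerProductSpace ℝ F] {u v w : F} (h : ‖u - w‖ + ‖v - w‖ < ‖w‖) : 0 < ⟪u, v⟫ := by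
  have hdiff : ‖u - v‖ < ‖u + v‖ := by
    have hsub : ‖u - v‖ ≤ ‖u - w‖ + ‖v - w‖ := by
      simpa only [norm_sub_rev w v] using norm_sub_le_norm_sub_add_norm_sub u w v
    have hadd : ‖(2 : ℝ) • w‖ ≤ ‖u + v‖ + (‖u - w‖ + ‖v - w‖) := by
      calc ‖(2 : ℝ) • w‖ = ‖(u + v) - ((u - w) + (v - w))‖ := by
            congr 1; rw [two_smul]; abel
        _ ≤ ‖u + v‖ + ‖(u - w) + (v - w)‖ := norm_sub_le _ _
        _ ≤ ‖u + v‖ + (‖u - w‖ + ‖v - w‖) := by gcongr; exact norm_add_le _ _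
    rw [norm_smul, Real.norm_two] at hadd
    linarith
  have hpolar : 4 * ⟪u, v⟫ = ‖u + v‖ ^ 2 - ‖u - v‖ ^ 2 := by
    rw [norm_add_sq_real, norm_sub_sq_real]; ring
  nlinarith [pow_lt_pow_left₀ hdiff (norm_nonneg _) two_ne_zero]

theorem ContinuousLinearMap.exists_pos_mul_norm_le_of_injective {E F : Type*}
    [NormedAddCommGroup E] [NormedSpace ℝ E] [FiniteDimensional ℝ E] [NormedAddCommGroup F]
    [NormedSpace ℝ F] {A : E →L[ℝ] F} (hA : Function.Injective A) :
    ∃ c > 0, ∀ v, c * ‖v‖ ≤ ‖A v‖ :=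
  antilipschitzWith_iff_exists_mul_le_norm.mp <|
    ((A : E →ₗ[ℝ] F).injective_iff_antilipschitz.mp hA).imp fun _ h => h.2

theorem HasFDerivAt.exists_pos_norm_slope_sub_le_and_norm_fderiv_sub_le {E F : Type*}
    [NormedAddCommGroup E] [NormedSpace ℝ E] [NormedAddCommGroup F] [NormedSpace ℝ F]
    {φ : E → F} {A : E →L[ℝ] F} (hφ : HasFDerivAt φ A 0)
    (hcont : ContinuousAt (fderiv ℝ φ) 0) {η : ℝ} (hη : 0 < η) :
    ∃ δ > (0 : ℝ), ∀ z : E, ‖z‖ ≤ 1 → ∀ t ∈ Ioo 0 δ,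
      ‖t⁻¹ • (φ (t • z) - φ 0) - A z‖ ≤ η ∧ ‖fderiv ℝ φ (t • z) z - A z‖ ≤ η := by
  have hslope : ∀ᶠ x in nhds 0, ‖φ x - φ 0 - A x‖ ≤ η * ‖x‖ := by
    simpa using hφ.isLittleO.bound hη
  have hderiv : ∀ᶠ x in nhds 0, ‖fderiv ℝ φ x - A‖ ≤ η := by
    simpa only [hφ.fderiv, dist_eq_norm] using hcont.eventually (Metric.closedBall_mem_nhds _ hη)
  obtain ⟨δ, hδ, hball⟩ := Metric.eventually_nhds_iff.mp (hslope.and hderiv)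
  refine ⟨δ, hδ, fun z hz t ht => ?_⟩
  have htz : ‖t • z‖ ≤ t := by
    rw [norm_smul, Real.norm_of_nonneg ht.1.le]; exact mul_le_of_le_one_right ht.1.le hz
  obtain ⟨hφtz, hDtz⟩ := hball (y := t • z) (by rw [dist_zero_right]; exact htz.trans_lt ht.2)
  constructor
  · have : ‖t • (t⁻¹ • (φ (t • z) - φ 0) - A z)‖ ≤ t * η := by
      rw [smul_sub, smul_inv_smul₀ ht.1.ne', ← map_smul]
      exact hφtz.trans (by nlinarith)
    rwa [norm_smul, Real.norm_of_nonneg ht.1.le, mul_le_mul_iff_right₀ ht.1] at this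
  · calc ‖fderiv ℝ φ (t • z) z - A z‖ = ‖(fderiv ℝ φ (t • z) - A) z‖ := rfl
      _ ≤ ‖fderiv ℝ φ (t • z) - A‖ * ‖z‖ := ContinuousLinearMap.le_opNorm _ _
      _ ≤ η := by nlinarith [norm_nonneg (fderiv ℝ φ (t • z) - A), norm_nonneg z]

/-- If `φ : ℝ^m → ℝ^m` is `C¹`, `φ(0) = 0` and `Dφ(0)` is injective, then there
is `ε > 0` such that for every unit vector `z` and every `t ∈ (0, ε)` the inner
product `⟪φ(t•z), Dφ(t•z)(z)⟫` is strictly positive: every image ray crosses the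
concentric spheres it meets transversely. -/
theorem cone_transverse_to_small_spheres (m : ℕ)
    (φ : EuclideanSpace ℝ (Fin m) → EuclideanSpace ℝ (Fin m))
    (hφ : ContDiff ℝ 1 φ) (h0 : φ 0 = 0)
    (hinj : Function.Injective (fderiv ℝ φ 0)) :
    ∃ ε > (0 : ℝ), ∀ z : EuclideanSpace ℝ (Fin m), ‖z‖ = 1 →
      ∀ t ∈ Set.Ioo (0 : ℝ) ε, 0 < ⟪φ (t • z), fderiv ℝ φ (t • z) z⟫ := by
  set A := fderiv ℝ φ 0
  obtain ⟨c, hc, hAc⟩ := ContinuousLinearMap.exists_pos_mul_norm_le_of_injective hinj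
  have hD : HasFDerivAt φ A 0 := (hφ.differentiable one_ne_zero 0).hasFDerivAt
  obtain ⟨δ, hδ, hray⟩ := hD.exists_pos_norm_slope_sub_le_and_norm_fderiv_sub_le
    (hφ.continuous_fderiv one_ne_zero).continuousAt (div_pos hc three_pos)
  refine ⟨δ, hδ, fun z hz t ht => ?_⟩
  obtain ⟨hslope, hderiv⟩ := hray z hz.le t ht
  rw [h0, sub_zero] at hslope
  have hpos : 0 < ⟪t⁻¹ • φ (t • z), fderiv ℝ φ (t • z) z⟫ := by
    have hAz : c ≤ ‖A z‖ := by simpa [hz] using hAc z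
    exact real_inner_pos_of_norm_sub_add_norm_sub_lt (w := A z) (by linarith)
  rw [real_inner_smul_left] at hpos
  exact pos_of_mul_pos_right hpos (inv_nonneg.mpr ht.1.le)
end

section
/- Let φ : ℝ^m → ℝ^m be strictly differentiable at a point x with derivative a continuous linear equivalence D : ℝ^m ≃L[ℝ] ℝ^m (HasStrictFDerivAt φ D x). Then for every set s ⊆ ℝ^m there exists a neighborhood V of x such that tangentConeAt ℝ (φ '' (s ∩ V)) (φ x) = D '' (tangentConeAt ℝ s x): the tangent cone of the image of s under φ at φ(x) is the image of the tangent cone of s at x under the derivative D. -/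
/-!
The derivative of a map always sends the tangent cone of a set into the tangent cone of its image.
By the inverse function theorem `φ` restricts to an open partial homeomorphism around `x` whose
inverse has derivative `D⁻¹` at `φ x`, so applying this to the inverse gives the other inclusion.
-/

open Set

theorem OpenPartialHomeomorph.tangentConeAt_image_inter_source {𝕜 E F : Type*}
    [NontriviallyNormedField 𝕜] [NormedAddCommGroup E] [NormedSpace 𝕜 E]
    [NormedAddCommGroup F] [NormedSpace 𝕜 F] (e : OpenPartialHomeomorph E F) {f' : E ≃L[𝕜] F}
    {x : E} (hx : x ∈ e.source) (he : HasFDerivAt e (f' : E →L[𝕜] F) x) (s : Set E) :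
    tangentConeAt 𝕜 (e '' (s ∩ e.source)) (e x) = f' '' tangentConeAt 𝕜 s x := by
  have hinter : tangentConeAt 𝕜 (s ∩ e.source) x = tangentConeAt 𝕜 s x :=
    tangentConeAt_inter_nhds (e.open_source.mem_nhds hx)
  refine Subset.antisymm (fun y hy => ?_) ?_
  · have he_symm : HasFDerivAt e.symm (f'.symm : F →L[𝕜] E) (e x) :=
      e.hasFDerivAt_symm (e.map_source hx) (by rwa [e.left_inv hx])
    have hy' := he_symm.hasFDerivWithinAt.mapsTo_tangent_cone hy
    rw [(e.leftInvOn.mono inter_subset_right).image_image, e.left_inv hx, hinter] at hy'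
    exact ⟨f'.symm y, hy', f'.apply_symm_apply y⟩
  · rw [← hinter]
    exact he.hasFDerivWithinAt.mapsTo_tangent_cone.image_subset

/-- If `φ : ℝ^m → ℝ^m` is strictly differentiable at `x` with invertible
derivative `D`, then for every set `s` there is a neighborhood `V` of `x` such
that the tangent cone of `φ '' (s ∩ V)` at `φ x` is the image under `D` of the
tangent cone of `s` at `x`. -/
theorem tangentCone_image_of_hasStrictFDerivAt (m : ℕ)
    (φ : EuclideanSpace ℝ (Fin m) → EuclideanSpace ℝ (Fin m))
    (x : EuclideanSpace ℝ (Fin m))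
    (D : EuclideanSpace ℝ (Fin m) ≃L[ℝ] EuclideanSpace ℝ (Fin m))
    (hφ : HasStrictFDerivAt φ (D : EuclideanSpace ℝ (Fin m) →L[ℝ]
      EuclideanSpace ℝ (Fin m)) x)
    (s : Set (EuclideanSpace ℝ (Fin m))) :
    ∃ V ∈ nhds x,
      tangentConeAt ℝ (φ '' (s ∩ V)) (φ x) = ⇑D '' tangentConeAt ℝ s x := by
  let e := hφ.toOpenPartialHomeomorph φ
  have hx : x ∈ e.source := hφ.mem_toOpenPartialHomeomorph_source
  exact ⟨e.source, e.open_source.mem_nhds hx,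
    e.tangentConeAt_image_inter_source hx hφ.hasFDerivAt s⟩
end

section
/- Let x : ℝ → ℝ^k be a C¹ curve into Euclidean space with x(0) = 0 and x'(0) ≠ 0. Then the radius function N(s) = ‖x(s)‖ is differentiable from the right at 0 with derivative ‖x'(0)‖ (HasDerivWithinAt N ‖x'(0)‖ (Ici 0) 0), and there exists δ > 0 such that N is continuously differentiable on [0, δ): for s ∈ (0, δ) its derivative equals ⟨x(s)/‖x(s)‖, x'(s)⟩, and this derivative tends to ‖x'(0)‖ as s → 0⁺. -/
/-!
Since `x 0 = 0`, the difference quotients `s⁻¹ • x s` tend to `x' 0 ≠ 0` as `s → 0⁺`. Taking norms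
gives the right derivative `‖x' 0‖` of `N` at `0`, and shows that `x s ≠ 0` on some `(0, δ)`,
where `N` is differentiable with derivative `⟪x s / ‖x s‖, x' s⟫`. The unit vector
`x s / ‖x s‖` is the normalization of `s⁻¹ • x s`, so it tends to `x' 0 / ‖x' 0‖`; by
continuity of `x'` the derivative of `N` then tends to `⟪x' 0 / ‖x' 0‖, x' 0⟫ = ‖x' 0‖`.
-/

open scoped RealInnerProductSpace Topology
open Filter Set

section NormedSpace

variable {E : Type*} [NormedAddCommGroup E] [NormedSpace ℝ E]

theorem continuousAt_normalize {v : E} (hv : v ≠ 0) : ContinuousAt NormedSpace.normalize v :=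
  (continuous_norm.continuousAt.inv₀ (norm_ne_zero_iff.2 hv)).smul continuousAt_id

variable {x : ℝ → E} {v : E}

theorem HasDerivAt.tendsto_inv_smul_nhdsGT_of_eq_zero (hx : HasDerivAt x v 0) (h0 : x 0 = 0) :
    Tendsto (fun s => s⁻¹ • x s) (𝓝[>] 0) (𝓝 v) := by
  simpa [h0] using hx.tendsto_slope_zero_right

theorem HasDerivAt.hasDerivWithinAt_norm_Ici_of_eq_zero (hx : HasDerivAt x v 0) (h0 : x 0 = 0) :
    HasDerivWithinAt (fun s => ‖x s‖) ‖v‖ (Ici 0) 0 := by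
  rw [← hasDerivWithinAt_Ioi_iff_Ici, hasDerivWithinAt_iff_tendsto_slope' self_notMem_Ioi]
  refine (hx.tendsto_inv_smul_nhdsGT_of_eq_zero h0).norm.congr' ?_
  filter_upwards [self_mem_nhdsWithin] with s (hs : 0 < s)
  simp [slope, h0, norm_smul, abs_of_pos hs]

theorem HasDerivAt.eventually_ne_zero_nhdsGT (hx : HasDerivAt x v 0) (h0 : x 0 = 0)
    (hv : v ≠ 0) : ∀ᶠ s in 𝓝[>] 0, x s ≠ 0 := by
  filter_upwards [(hx.tendsto_inv_smul_nhdsGT_of_eq_zero h0).eventually_ne hv] with s hs hxs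
  simp [hxs] at hs

theorem HasDerivAt.tendsto_normalize_nhdsGT (hx : HasDerivAt x v 0) (h0 : x 0 = 0)
    (hv : v ≠ 0) :
    Tendsto (fun s => NormedSpace.normalize (x s)) (𝓝[>] 0) (𝓝 (NormedSpace.normalize v)) := by
  refine ((continuousAt_normalize hv).tendsto.comp
    (hx.tendsto_inv_smul_nhdsGT_of_eq_zero h0)).congr' ?_
  filter_upwards [self_mem_nhdsWithin] with s (hs : 0 < s)
  exact NormedSpace.normalize_smul_of_pos (inv_pos.2 hs) _

end NormedSpace

section InnerProductSpace

variable {F : Type*} [NormedAddCommGroup F] [InnerProductSpace ℝ F]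

theorem inner_normalize_self (v : F) : ⟪NormedSpace.normalize v, v⟫ = ‖v‖ := by
  rcases eq_or_ne v 0 with rfl | hv
  · simp
  · rw [NormedSpace.normalize, real_inner_smul_left, real_inner_self_eq_norm_sq]
    field_simp

theorem HasDerivAt.norm {x : ℝ → F} {v : F} {s : ℝ} (hx : HasDerivAt x v s) (hs : x s ≠ 0) :
    HasDerivAt (fun t => ‖x t‖) ⟪NormedSpace.normalize (x s), v⟫ s := by
  have hsq : ‖x s‖ ^ 2 ≠ 0 := pow_ne_zero 2 (norm_ne_zero_iff.2 hs)
  convert hx.norm_sq.sqrt hsq using 1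
  · simp [Real.sqrt_sq (norm_nonneg _)]
  · rw [Real.sqrt_sq (norm_nonneg _), NormedSpace.normalize, real_inner_smul_left]
    field_simp

end InnerProductSpace

/-- If `x : ℝ → ℝ^k` is a `C¹` curve with `x 0 = 0` and `x' 0 ≠ 0`, then the
radius function `N s = ‖x s‖` has right derivative `‖x' 0‖` at `0`, and, on
some interval `[0, δ)`, `N` is `C¹`: for `s ∈ (0, δ)` its derivative equals
`⟪x s / ‖x s‖, x' s⟫`, and this derivative tends to `‖x' 0‖` as `s → 0⁺`. -/
theorem radius_function_C1_up_to_boundary (k : ℕ)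
    (x : ℝ → EuclideanSpace ℝ (Fin k)) (hx : ContDiff ℝ 1 x)
    (h0 : x 0 = 0) (h0' : deriv x 0 ≠ 0)
    (N : ℝ → ℝ) (hN : N = fun s => ‖x s‖) :
    HasDerivWithinAt N ‖deriv x 0‖ (Set.Ici 0) 0 ∧
    ∃ δ > (0 : ℝ),
      (∀ s ∈ Set.Ioo (0 : ℝ) δ,
        HasDerivAt N ⟪(‖x s‖)⁻¹ • x s, deriv x s⟫ s) ∧
      Filter.Tendsto (fun s => ⟪(‖x s‖)⁻¹ • x s, deriv x s⟫)
        (nhdsWithin 0 (Set.Ioi 0)) (nhds ‖deriv x 0‖) := by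
  subst hN
  have hderiv (s : ℝ) : HasDerivAt x (deriv x s) s :=
    ((hx.differentiable one_ne_zero) s).hasDerivAt
  obtain ⟨δ, hδ, hne⟩ := mem_nhdsGT_iff_exists_Ioo_subset.1
    ((hderiv 0).eventually_ne_zero_nhdsGT h0 h0')
  refine ⟨(hderiv 0).hasDerivWithinAt_norm_Ici_of_eq_zero h0, δ, hδ,
    fun s hs => (hderiv s).norm (hne hs), ?_⟩
  have hlim := ((hderiv 0).tendsto_normalize_nhdsGT h0 h0').inner (𝕜 := ℝ)
    (((hx.continuous_deriv le_rfl).tendsto 0).mono_left nhdsWithin_le_nhds)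
  rwa [inner_normalize_self] at hlim
end

section
/- Fix integers k, m ≥ 1 and reals r, ρ > 0. Let γ(s) = (x(s), y(s)) : ℝ → ℝ^k × ℝ^m be a C¹ curve with x(0) = 0, x'(0) ≠ 0, and ‖y(s)‖ = r for all s ≥ 0. Define the transferred curve η(s) := (‖x(s)‖/ρ) • y(s) ∈ ℝ^m, which records the fiber coordinate at which the flow line of the Morse-model flow Φ_t(x, y) = (e^t x, e^{−t} y) through γ(s) crosses the set {‖x‖ = ρ}. Then η is differentiable from the right at 0 with derivative (‖x'(0)‖/ρ) • y(0), i.e. HasDerivWithinAt η ((‖x'(0)‖/ρ) • y(0)) (Ici 0) 0. In particular the tangent direction at 0 of the transferred curve is the radial direction through y(0), independently of y'(0). -/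
open Set Filter Topology

variable {E : Type*} [NormedAddCommGroup E] [NormedSpace ℝ E]

theorem HasDerivWithinAt.norm_Ici_of_apply_eq_zero {x : ℝ → E} {v : E} {a : ℝ}
    (hx : HasDerivWithinAt x v (Ici a) a) (hxa : x a = 0) :
    HasDerivWithinAt (fun t => ‖x t‖) ‖v‖ (Ici a) a := by
  rw [hasDerivWithinAt_iff_tendsto_slope] at hx ⊢
  refine hx.norm.congr' ?_
  filter_upwards [self_mem_nhdsWithin] with t ⟨hat, hta⟩
  have hpos : 0 < t - a := sub_pos.mpr (lt_of_le_of_ne hat (Ne.symm hta))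
  simp only [slope_def_module, hxa, sub_zero, norm_zero, norm_smul, norm_inv,
    Real.norm_of_nonneg hpos.le, smul_eq_mul]

/-- Since `f a = 0`, the difference quotient of `f • g` at `a` is `slope f a t • g t`. -/
theorem HasDerivWithinAt.smul_of_apply_eq_zero {f : ℝ → ℝ} {g : ℝ → E} {c : ℝ} {s : Set ℝ}
    {a : ℝ} (hf : HasDerivWithinAt f c s a) (hfa : f a = 0) (hg : ContinuousWithinAt g s a) :
    HasDerivWithinAt (fun t => f t • g t) (c • g a) s a := by
  rw [hasDerivWithinAt_iff_tendsto_slope] at hf ⊢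
  refine (hf.smul (hg.mono_left (nhdsWithin_mono _ sdiff_subset))).congr' ?_
  filter_upwards with t
  simp only [slope_def_module, hfa, zero_smul, sub_zero, smul_smul, smul_eq_mul]

theorem magic_fact_one_curve_general (k m : ℕ)
    (ρ : ℝ)
    (γ : ℝ → EuclideanSpace ℝ (Fin k) × EuclideanSpace ℝ (Fin m))
    (hγ : ContDiff ℝ 1 γ)
    (hx0 : (γ 0).1 = 0)
    (η : ℝ → EuclideanSpace ℝ (Fin m))
    (hη : η = fun s => (‖(γ s).1‖ / ρ) • (γ s).2) :
    HasDerivWithinAt η ((‖deriv (fun s => (γ s).1) 0‖ / ρ) • (γ 0).2)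
      (Set.Ici 0) 0 := by
  have hγd : DifferentiableAt ℝ γ 0 := hγ.differentiable one_ne_zero 0
  have hx : HasDerivWithinAt (fun s => ‖(γ s).1‖ / ρ)
      (‖deriv (fun s => (γ s).1) 0‖ / ρ) (Ici 0) 0 :=
    (hγd.fst.hasDerivAt.hasDerivWithinAt.norm_Ici_of_apply_eq_zero hx0).div_const ρ
  subst hη
  exact hx.smul_of_apply_eq_zero (by simp [hx0]) hγd.snd.continuousAt.continuousWithinAt

/-- One-curve version of the "Magic Fact" of the Morse model: for a `C¹` curve
`γ(s) = (x(s), y(s))` in `ℝ^k × ℝ^m` with `x(0) = 0`, `x'(0) ≠ 0` and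
`‖y(s)‖ = r` for `s ≥ 0`, the transferred curve `η(s) = (‖x(s)‖/ρ) • y(s)` has
right derivative `(‖x'(0)‖/ρ) • y(0)` at `0`: its tangent direction is the
radial direction through `y(0)`, independently of `y'(0)`. -/
theorem magic_fact_one_curve (k m : ℕ) (hk : 1 ≤ k) (hm : 1 ≤ m)
    (r ρ : ℝ) (hr : 0 < r) (hρ : 0 < ρ)
    (γ : ℝ → EuclideanSpace ℝ (Fin k) × EuclideanSpace ℝ (Fin m))
    (hγ : ContDiff ℝ 1 γ)
    (hx0 : (γ 0).1 = 0)
    (hx0' : deriv (fun s => (γ s).1) 0 ≠ 0)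
    (hy : ∀ s : ℝ, 0 ≤ s → ‖(γ s).2‖ = r)
    (η : ℝ → EuclideanSpace ℝ (Fin m))
    (hη : η = fun s => (‖(γ s).1‖ / ρ) • (γ s).2) :
    HasDerivWithinAt η ((‖deriv (fun s => (γ s).1) 0‖ / ρ) • (γ 0).2)
      (Set.Ici 0) 0 :=
  magic_fact_one_curve_general k m ρ γ hγ hx0 η hη
end

section
/- Let φ : ℝ → Homeo(ℝⁿ) be a one-parameter group of C¹ diffeomorphisms of ℝⁿ: φ(0) is the identity, φ(s + t) = φ(s) ∘ φ(t) for all s, t ∈ ℝ, and for every t both φ(t) and its inverse are C¹ maps. Let f : ℝ^a → ℝⁿ be a C¹ map and S ⊆ ℝⁿ a set. Call a C¹ map g : ℝ^a → ℝⁿ transverse to a set U if for every point a with g(a) ∈ U, the linear span of range(Dg(a)) ∪ tangentConeAt ℝ U (g(a)) is all of ℝⁿ. Assume there is ε > 0 such that φ(s) ∘ f is transverse to S for every s ∈ (0, ε). Then for all 0 < t₁ < t₂ < ε and every t ∈ [0, t₁], the map φ(t₂) ∘ f is transverse to the set φ(t)(S) (the image of S under φ(t)). -/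
/-!
Write `φ t₂ ∘ f = φ t ∘ (φ (t₂ - t) ∘ f)` by the group law. Since `t₂ - t ∈ (0, ε)`, the inner
map is transverse to `S`, and transversality survives composition with the diffeomorphism
`φ t`: its derivative is onto, it maps tangent cones of `S` into tangent cones
of `φ t '' S`, and it is injective, so points of `φ t '' S` come from points of `S`.
-/

/-- A `C¹` map `g : ℝ^a → ℝⁿ` is transverse to a set `U ⊆ ℝⁿ` if at every
point sent into `U`, the range of the derivative of `g` together with the
tangent cone of `U` spans all of `ℝⁿ`. -/
def IsTransverseTo {a n : ℕ}
    (g : EuclideanSpace ℝ (Fin a) → EuclideanSpace ℝ (Fin n))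
    (U : Set (EuclideanSpace ℝ (Fin n))) : Prop :=
  ∀ p, g p ∈ U →
    Submodule.span ℝ
      (Set.range ⇑(fderiv ℝ g p) ∪ tangentConeAt ℝ U (g p)) = ⊤

open Set Function

section SpanTangentCone

variable {𝕜 E F G : Type*} [NontriviallyNormedField 𝕜]
  [NormedAddCommGroup E] [NormedSpace 𝕜 E] [NormedAddCommGroup F] [NormedSpace 𝕜 F]
  [NormedAddCommGroup G] [NormedSpace 𝕜 G]

theorem surjective_fderiv_of_rightInverse {Φ : F → G} {ψ : G → F} {y : G}
    (hΦ : DifferentiableAt 𝕜 Φ (ψ y)) (hψ : DifferentiableAt 𝕜 ψ y) (h : RightInverse ψ Φ) :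
    Surjective (fderiv 𝕜 Φ (ψ y)) := by
  have hchain : (fderiv 𝕜 Φ (ψ y)).comp (fderiv 𝕜 ψ y) = ContinuousLinearMap.id 𝕜 G := by
    rw [← fderiv_comp y hΦ hψ, show Φ ∘ ψ = id from funext h, fderiv_id]
  exact fun v ↦ ⟨fderiv 𝕜 ψ y v, by simpa using congrArg (· v) hchain⟩

theorem span_range_fderiv_union_tangentConeAt_comp_eq_top {g : E → F} {Φ : F → G}
    {U : Set F} {p : E} (hg : DifferentiableAt 𝕜 g p) (hΦ : DifferentiableAt 𝕜 Φ (g p))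
    (hsurj : Surjective (fderiv 𝕜 Φ (g p)))
    (h : Submodule.span 𝕜 (range (fderiv 𝕜 g p) ∪ tangentConeAt 𝕜 U (g p)) = ⊤) :
    Submodule.span 𝕜
      (range (fderiv 𝕜 (Φ ∘ g) p) ∪ tangentConeAt 𝕜 (Φ '' U) (Φ (g p))) = ⊤ := by
  set A := fderiv 𝕜 Φ (g p)
  have himage : Submodule.span 𝕜 (A '' (range (fderiv 𝕜 g p) ∪ tangentConeAt 𝕜 U (g p))) = ⊤ := by
    refine (Submodule.span_image (A : F →ₗ[𝕜] G)).trans ?_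
    rw [h, Submodule.map_top, LinearMap.range_eq_top]
    exact hsurj
  refine top_unique (himage ▸ Submodule.span_mono ?_)
  rw [image_union, fderiv_comp p hΦ hg, ContinuousLinearMap.coe_comp, range_comp]
  exact union_subset_union_right _ hΦ.hasFDerivAt.hasFDerivWithinAt.mapsTo_tangent_cone.image_subset

end SpanTangentCone

theorem IsTransverseTo.comp_of_inverse {a n : ℕ}
    {g : EuclideanSpace ℝ (Fin a) → EuclideanSpace ℝ (Fin n)}
    {U : Set (EuclideanSpace ℝ (Fin n))}
    {Φ ψ : EuclideanSpace ℝ (Fin n) → EuclideanSpace ℝ (Fin n)}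
    (htrans : IsTransverseTo g U) (hg : Differentiable ℝ g) (hΦ : Differentiable ℝ Φ)
    (hψ : Differentiable ℝ ψ) (hl : LeftInverse ψ Φ) (hr : RightInverse ψ Φ) :
    IsTransverseTo (Φ ∘ g) (Φ '' U) := by
  intro p hp
  have hgp : g p ∈ U := (hl.injective.mem_set_image).mp hp
  have hsurj : Surjective (fderiv ℝ Φ (g p)) := by
    simpa only [hl (g p)] using surjective_fderiv_of_rightInverse (hΦ _) (hψ (Φ (g p))) hr
  exact span_range_fderiv_union_tangentConeAt_comp_eq_top (hg p) (hΦ _) hsurj (htrans p hgp)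

theorem transverse_to_one_parameter_family_general (a n : ℕ)
    (φ : ℝ → EuclideanSpace ℝ (Fin n) → EuclideanSpace ℝ (Fin n))
    (hgrp : ∀ s t : ℝ, φ (s + t) = φ s ∘ φ t)
    (hC1 : ∀ t : ℝ, ContDiff ℝ 1 (φ t))
    (hinvC1 : ∀ t : ℝ, ∃ ψ : EuclideanSpace ℝ (Fin n) → EuclideanSpace ℝ (Fin n),
      ContDiff ℝ 1 ψ ∧ Function.LeftInverse ψ (φ t) ∧ Function.RightInverse ψ (φ t))
    (f : EuclideanSpace ℝ (Fin a) → EuclideanSpace ℝ (Fin n))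
    (hf : ContDiff ℝ 1 f)
    (S : Set (EuclideanSpace ℝ (Fin n)))
    (ε : ℝ)
    (htrans : ∀ s ∈ Set.Ioo (0 : ℝ) ε, IsTransverseTo (φ s ∘ f) S) :
    ∀ t₁ t₂ : ℝ, 0 < t₁ → t₁ < t₂ → t₂ < ε → ∀ t ∈ Set.Icc (0 : ℝ) t₁,
      IsTransverseTo (φ t₂ ∘ f) (φ t '' S) := by
  intro t₁ t₂ _ h12 h2ε t ⟨ht0, htt₁⟩
  have hsplit : φ t₂ ∘ f = φ t ∘ (φ (t₂ - t) ∘ f) := by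
    rw [← comp_assoc, ← hgrp, add_sub_cancel]
  have hmem : t₂ - t ∈ Ioo 0 ε := ⟨by linarith, by linarith⟩
  obtain ⟨ψ, hψ, hl, hr⟩ := hinvC1 t
  rw [hsplit]
  exact (htrans _ hmem).comp_of_inverse (((hC1 _).comp hf).differentiable one_ne_zero)
    ((hC1 t).differentiable one_ne_zero) (hψ.differentiable one_ne_zero) hl hr

/-- Formula (3.2) of the paper: if a one-parameter group `φ` of `C¹`
diffeomorphisms makes the `C¹` map `f` immediately transverse to `S` (that is,
`φ s ∘ f ⋔ S` for all `s ∈ (0, ε)`), then for all `0 < t₁ < t₂ < ε` and every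
`t ∈ [0, t₁]`, the map `φ t₂ ∘ f` is transverse to `φ t '' S`. -/
theorem transverse_to_one_parameter_family (a n : ℕ)
    (φ : ℝ → EuclideanSpace ℝ (Fin n) → EuclideanSpace ℝ (Fin n))
    (hφ0 : φ 0 = id)
    (hgrp : ∀ s t : ℝ, φ (s + t) = φ s ∘ φ t)
    (hC1 : ∀ t : ℝ, ContDiff ℝ 1 (φ t))
    (hbij : ∀ t : ℝ, Function.Bijective (φ t))
    (hinvC1 : ∀ t : ℝ, ∃ ψ : EuclideanSpace ℝ (Fin n) → EuclideanSpace ℝ (Fin n),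
      ContDiff ℝ 1 ψ ∧ Function.LeftInverse ψ (φ t) ∧ Function.RightInverse ψ (φ t))
    (f : EuclideanSpace ℝ (Fin a) → EuclideanSpace ℝ (Fin n))
    (hf : ContDiff ℝ 1 f)
    (S : Set (EuclideanSpace ℝ (Fin n)))
    (ε : ℝ) (hε : 0 < ε)
    (htrans : ∀ s ∈ Set.Ioo (0 : ℝ) ε, IsTransverseTo (φ s ∘ f) S) :
    ∀ t₁ t₂ : ℝ, 0 < t₁ → t₁ < t₂ → t₂ < ε → ∀ t ∈ Set.Icc (0 : ℝ) t₁,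
      IsTransverseTo (φ t₂ ∘ f) (φ t '' S) :=
  transverse_to_one_parameter_family_general a n φ hgrp hC1 hinvC1 f hf S ε htrans
end
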